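/- Let 𝒜 be a relational structure over τ with universe A, let 𝒜_V be a view structure for 𝒜, and let O = {X_1,…,X_m} ⊆ A be such that every X_j is domain restricted in 𝒜 and every singleton {X_j} is tp-covered in 𝒜_V. Let ℬ be a structure over τ, let 1 ≤ i ≤ m, let h* be a homomorphism from 𝒜 to ℬ, and set a_j = h*(X_j) for j < i. Let ℬ_i be obtained from ℬ by replacing dom(X_j)^ℬ with {(a_j)} for every j < i (all other relations unchanged), and let ℬ_V be any τ_V-structure legal with respect to 𝒜_V and (𝒜,ℬ_i). Then dom(X_i)^{GAC(𝒜_V,ℬ_V)} (where dom(X_i) also denotes the base view of the domain constraint of X_i) equals the set { (a) : there exists a homomorphism h from 𝒜 to ℬ with h(X_j) = a_j for all j < i and h(X_i) = a }, and this set is nonempty. -/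

import Mathlib

/-!
Projections of solutions are pairwise consistent and lie in every legal structure, so they survive
GAC. Conversely, let `g` survive GAC on a view whose variable set `O` is tp-covered. Adding the
projections of all solutions to a pairwise consistent family containing `g` keeps it pairwise
consistent and, thanks to `h*`, makes every view nonempty. Its assignments then glue along the join
tree of a tree projection of a core `𝒜'` of `𝒜 ⊎ 𝕊_O`, and composing with a homomorphism
`𝒜 ⊎ 𝕊_O → 𝒜'`, which necessarily fixes `O`, yields a solution extending `g`. Pinning `dom(X_j)`
to `a_j` for `j < i` cuts the solutions down to those agreeing with `h*` on these `X_j`.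
-/

open Set

/-- A relational structure over vocabulary `σ` (with arities `ar`) and universe `A`. -/
structure RelStruct (σ : Type) (ar : σ → ℕ) (A : Type) where
  rel : ∀ R : σ, Set (Fin (ar R) → A)

variable {σ : Type} {ar : σ → ℕ} {A B : Type}

/-- `h` is a homomorphism from `𝒜` to `ℬ`. -/
def IsHom (𝒜 : RelStruct σ ar A) (ℬ : RelStruct σ ar B) (h : A → B) : Prop :=
  ∀ R : σ, ∀ t ∈ 𝒜.rel R, (fun i => h (t i)) ∈ ℬ.rel R

/-- `𝒜^ℬ[X]`: the set of restrictions to `X` of homomorphisms from `𝒜` to `ℬ`. -/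
def homRestrict (𝒜 : RelStruct σ ar A) (ℬ : RelStruct σ ar B) (X : Set A) :
    Set (↥X → B) :=
  { g | ∃ h : A → B, IsHom 𝒜 ℬ h ∧ g = X.restrict h }

/-- `𝒜'` is a (relation-wise) substructure of `𝒜`. -/
def SubStructOf (𝒜' 𝒜 : RelStruct σ ar A) : Prop :=
  ∀ R : σ, 𝒜'.rel R ⊆ 𝒜.rel R

/-- `𝒜'` is a core of `𝒜`. -/
def IsCoreOf (𝒜' 𝒜 : RelStruct σ ar A) : Prop :=
  SubStructOf 𝒜' 𝒜 ∧ (∃ h : A → A, IsHom 𝒜 𝒜' h) ∧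
    ∀ 𝒜'' : RelStruct σ ar A, SubStructOf 𝒜'' 𝒜' → 𝒜'' ≠ 𝒜' →
      ¬ ∃ h : A → A, IsHom 𝒜 𝒜'' h

/-- `X` is domain restricted in `𝒜`, with (unary) domain-constraint symbol `dR`. -/
def DomRestricted (𝒜 : RelStruct σ ar A) (dR : σ) (X : A) : Prop :=
  ar dR = 1 ∧ 𝒜.rel dR = {fun _ => X}

/-- A view structure (v-structure) for `𝒜`, over the vocabulary `ν` of views:
each view `v` has a set of variables (the entries of its single defining tuple),
and every constraint of `𝒜` has a base view. -/
structure ViewStruct (σ : Type) (ar : σ → ℕ) (A : Type) (𝒜 : RelStruct σ ar A)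
    (ν : Type) where
  vars : ν → Set A
  base : ∀ R : σ, ∀ t : Fin (ar R) → A, t ∈ 𝒜.rel R → ν
  base_vars : ∀ R t ht, vars (base R t ht) = Set.range t

variable {ν : Type} {𝒜 : RelStruct σ ar A}

/-- Restriction of an assignment on `W` to a subset `S ⊆ W`. -/
def restr {W S : Set A} (hSW : S ⊆ W) (g : ↥W → B) : ↥S → B :=
  fun x => g ⟨x.1, hSW x.2⟩

/-- `BV` (a τ_V-structure, given as a set of assignments for each view) is legal
w.r.t. `V` and the instance `(𝒜,ℬ)`. -/
def Legal (𝒜 : RelStruct σ ar A) (ℬ : RelStruct σ ar B)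
    (V : ViewStruct σ ar A 𝒜 ν) (BV : ∀ v : ν, Set (↥(V.vars v) → B)) : Prop :=
  (∀ v : ν, homRestrict 𝒜 ℬ (V.vars v) ⊆ BV v) ∧
  (∀ (R : σ) (t : Fin (ar R) → A) (ht : t ∈ 𝒜.rel R),
     ∀ g ∈ BV (V.base R t ht),
       (fun i => g ⟨t i, by rw [V.base_vars]; exact Set.mem_range_self i⟩) ∈ ℬ.rel R)

/-- Pairwise consistency of a family of view relations w.r.t. `V`. -/
def PWConsistent (V : ViewStruct σ ar A 𝒜 ν)
    (BV' : ∀ v : ν, Set (↥(V.vars v) → B)) : Prop :=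
  ∀ v1 v2 : ν, (V.vars v1 ∩ V.vars v2).Nonempty →
    restr Set.inter_subset_left '' BV' v1 = restr Set.inter_subset_right '' BV' v2

/-- `GAC V BV`: the largest pairwise consistent sub-structure of `BV`
(defined as the union of all pairwise consistent sub-structures). -/
def GAC (V : ViewStruct σ ar A 𝒜 ν) (BV : ∀ v : ν, Set (↥(V.vars v) → B)) :
    ∀ v : ν, Set (↥(V.vars v) → B) :=
  fun v => { g | ∃ BV' : ∀ w : ν, Set (↥(V.vars w) → B),
    (∀ w, BV' w ⊆ BV w) ∧ PWConsistent V BV' ∧ g ∈ BV' v }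

/-- `h` is a homomorphism from the v-structure `𝒜_V` to `ℬ_V` (reading the single
tuple of each view as an assignment). -/
def IsViewHom (V : ViewStruct σ ar A 𝒜 ν) (BV : ∀ v : ν, Set (↥(V.vars v) → B))
    (h : A → B) : Prop :=
  ∀ v : ν, (V.vars v).restrict h ∈ BV v

/-- The hyperedges of the hypergraph `ℋ_𝒜` of a structure `𝒜`. -/
def structEdges (𝒜 : RelStruct σ ar A) : Set (Set A) :=
  { e | ∃ (R : σ) (t : Fin (ar R) → A), t ∈ 𝒜.rel R ∧ e = Set.range t }

/-- The hyperedges of the hypergraph `ℋ_{𝒜_V}` of a v-structure. -/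
def viewEdges (V : ViewStruct σ ar A 𝒜 ν) : Set (Set A) := Set.range V.vars

/-- `H1 ≤ H2`: every hyperedge of `H1` is contained in some hyperedge of `H2`. -/
def HypLE (H1 H2 : Set (Set A)) : Prop := ∀ e ∈ H1, ∃ e' ∈ H2, e ⊆ e'

/-- `T` is a join tree of the hypergraph with hyperedges `H`. -/
def IsJoinTree (H : Set (Set A)) (T : SimpleGraph ↥H) : Prop :=
  T.IsTree ∧ ∀ (X : A) (e1 e2 : ↥H), X ∈ (e1 : Set A) → X ∈ (e2 : Set A) →
    ∀ p : T.Walk e1 e2, p.IsPath → ∀ e ∈ p.support, X ∈ (e : Set A)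

/-- A hypergraph is acyclic iff it has a join tree. -/
def AcyclicHyp (H : Set (Set A)) : Prop := ∃ T : SimpleGraph ↥H, IsJoinTree H T

/-- `(H1, H2)` has a tree projection. -/
def HasTreeProjection (H1 H2 : Set (Set A)) : Prop :=
  ∃ Ha : Set (Set A), AcyclicHyp Ha ∧ HypLE H1 Ha ∧ HypLE Ha H2

/-- `𝒜 ⊎ 𝕊_O`, where the single tuple `t` (of length `r`) enumerates `O`. -/
def addRel (𝒜 : RelStruct σ ar A) (r : ℕ) (t : Fin r → A) :
    RelStruct (σ ⊕ Unit) (Sum.elim ar fun _ => r) A where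
  rel := fun R => match R with
    | Sum.inl R => 𝒜.rel R
    | Sum.inr _ => {t}

/-- `𝒜 ⊎ ⨄_{X ∈ O} 𝕊_{{X}}`. -/
def addSingles (𝒜 : RelStruct σ ar A) (O : Set A) :
    RelStruct (σ ⊕ ↥O) (Sum.elim ar fun _ => 1) A where
  rel := fun R => match R with
    | Sum.inl R => 𝒜.rel R
    | Sum.inr X => {fun _ => (X : A)}

/-- `O` is tp-covered in the v-structure `V`. -/
def TpCovered (V : ViewStruct σ ar A 𝒜 ν) (O : Set A) : Prop :=
  ∃ (r : ℕ) (t : Fin r → A), Function.Injective t ∧ Set.range t = O ∧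
    ∃ 𝒜' : RelStruct (σ ⊕ Unit) (Sum.elim ar fun _ => r) A,
      IsCoreOf 𝒜' (addRel 𝒜 r t) ∧
      HasTreeProjection (structEdges 𝒜') (viewEdges V)

/-- The assignments on `W` that satisfy all constraints of `𝒜` whose variables
all lie in `W` (interpreted in `ℬ`). -/
def solsOn (𝒜 : RelStruct σ ar A) (ℬ : RelStruct σ ar B) (W : Set A) :
    Set (↥W → B) :=
  { g | ∀ (R : σ) (t : Fin (ar R) → A), t ∈ 𝒜.rel R →
      ∀ hsub : ∀ i, t i ∈ W, (fun i => g ⟨t i, hsub i⟩) ∈ ℬ.rel R }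

/-- The constraints of `𝒜`. -/
def Cst (𝒜 : RelStruct σ ar A) : Type := Σ R : σ, {t : Fin (ar R) → A // t ∈ 𝒜.rel R}

/-- The variables of a constraint. -/
def cstVars (c : Cst 𝒜) : Set A := Set.range c.2.1

/-- Index type for the views of `ℓ-tw_k`: the nonempty sets of at most `k` variables. -/
def twIdx (A : Type) (k : ℕ) : Type := {W : Set A // W.Nonempty ∧ W.Finite ∧ W.ncard ≤ k}

/-- The v-structure `ℓ-tw_k(𝒜)`. -/
def twViews (𝒜 : RelStruct σ ar A) (k : ℕ) :
    ViewStruct σ ar A 𝒜 (twIdx A k ⊕ Cst 𝒜) where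
  vars := Sum.elim (fun W => W.1) cstVars
  base := fun R t ht => Sum.inr ⟨R, ⟨t, ht⟩⟩
  base_vars := fun _ _ _ => rfl

/-- The legal structure `r-tw_k(𝒜,ℬ)`. -/
def rtw (𝒜 : RelStruct σ ar A) (ℬ : RelStruct σ ar B) (k : ℕ) :
    ∀ v : twIdx A k ⊕ Cst 𝒜, Set (↥((twViews 𝒜 k).vars v) → B) :=
  fun v => solsOn 𝒜 ℬ ((twViews 𝒜 k).vars v)

/-- Index type for the views of `ℓ-hw_k`: nonempty sets of at most `k` constraints. -/
def hwIdx (𝒜 : RelStruct σ ar A) (k : ℕ) : Type :=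
  {C : Finset (Cst 𝒜) // C.Nonempty ∧ C.card ≤ k}

/-- The variables occurring in a set of constraints. -/
def hwVars (C : Finset (Cst 𝒜)) : Set A := ⋃ c ∈ C, cstVars c

/-- The v-structure `ℓ-hw_k(𝒜)` (for `k ≥ 1`). -/
def hwViews (𝒜 : RelStruct σ ar A) (k : ℕ) (hk : 1 ≤ k) :
    ViewStruct σ ar A 𝒜 (hwIdx 𝒜 k) where
  vars := fun C => hwVars C.1
  base := fun R t ht => ⟨{⟨R, ⟨t, ht⟩⟩}, Finset.singleton_nonempty _, le_trans (le_of_eq (Finset.card_singleton _)) hk⟩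
  base_vars := fun R t ht => by
    ext x; simp only [hwVars, cstVars, Set.mem_iUnion]
    exact ⟨fun ⟨c, hc, hx⟩ => by obtain rfl : c = _ := Finset.mem_singleton.mp hc; exact hx,
      fun hx => ⟨⟨R, ⟨t, ht⟩⟩, Finset.mem_singleton_self _, hx⟩⟩

/-- The legal structure `r-hw_k(𝒜,ℬ)`: each view holds the solutions of its subproblem. -/
def rhw (𝒜 : RelStruct σ ar A) (ℬ : RelStruct σ ar B) (k : ℕ) (hk : 1 ≤ k) :
    ∀ C : hwIdx 𝒜 k, Set (↥((hwViews 𝒜 k hk).vars C) → B) :=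
  fun C => { g | ∀ (c : Cst 𝒜) (hc : c ∈ C.1),
    (fun i => g ⟨c.2.1 i, Set.mem_iUnion₂.mpr ⟨c, hc, Set.mem_range_self i⟩⟩) ∈ ℬ.rel c.1 }

/-- Replace the relation of symbol `dR` in `ℬ` by `s`. -/
noncomputable def replaceRel (ℬ : RelStruct σ ar B) (dR : σ)
    (s : Set (Fin (ar dR) → B)) : RelStruct σ ar B :=
  letI := Classical.decEq σ
  ⟨Function.update ℬ.rel dR s⟩

/-- Replace the relation of view `v0` by `s`. -/
noncomputable def updateView (V : ViewStruct σ ar A 𝒜 ν)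
    (BV : ∀ v : ν, Set (↥(V.vars v) → B)) (v0 : ν) (s : Set (↥(V.vars v0) → B)) :
    ∀ v : ν, Set (↥(V.vars v) → B) :=
  letI := Classical.decEq ν
  Function.update BV v0 s

/-- The Gaifman graph of a structure. -/
def gaifman (𝒜 : RelStruct σ ar A) : SimpleGraph A where
  Adj u v := u ≠ v ∧ ∃ (R : σ) (t : Fin (ar R) → A),
      t ∈ 𝒜.rel R ∧ u ∈ Set.range t ∧ v ∈ Set.range t
  symm := ⟨fun u v h => ⟨h.1.symm, by obtain ⟨-, R, t, ht, hu, hv⟩ := h; exact ⟨R, t, ht, hv, hu⟩⟩⟩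
  loopless := ⟨fun u h => h.1 rfl⟩

/-- The `m × n` grid graph. -/
def gridGraph (m n : ℕ) : SimpleGraph (Fin m × Fin n) where
  Adj u v := Nat.dist u.1.1 v.1.1 + Nat.dist u.2.1 v.2.1 = 1
  symm := ⟨by intro u v h; simpa [Nat.dist_comm] using h⟩
  loopless := ⟨by intro u h; simp [Nat.dist_self] at h⟩

/-- Two nodes share a hyperedge of `H`. -/
def sharesEdge (H : Set (Set A)) (u w : A) : Prop := ∃ e ∈ H, u ∈ e ∧ w ∈ e

/-- The hypergraph with hyperedges `H` is connected (over the whole universe). -/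
def HypConnected (H : Set (Set A)) : Prop :=
  ∀ x y : A, Relation.ReflTransGen (sharesEdge H) x y

theorem SimpleGraph.IsAcyclic.eq_concat_or_eq_concat {V : Type} {G : SimpleGraph V}
    (hG : G.IsAcyclic) {r u w : V} {p : G.Walk r u} {q : G.Walk r w} (hp : p.IsPath)
    (hq : q.IsPath) (h : G.Adj u w) : q = p.concat h ∨ p = q.concat h.symm := by
  by_cases hu : u ∈ q.support
  · exact .inl (hG.path_concat hp hq h hu)
  · exact .inr (hG.path_concat hq hp h.symm
      (hG.mem_support_of_ne_mem_support_of_adj_of_isPath hp hq h hu))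

section JoinTreeGluing

variable {α β ι : Type}

def AgreesOn (E : ι → Set α) {i j : ι} (x : E i → β) (y : E j → β) : Prop :=
  ∀ a (hi : a ∈ E i) (hj : a ∈ E j), x ⟨a, hi⟩ = y ⟨a, hj⟩

def PairwiseExtendable (E : ι → Set α) (SS : ∀ i, Set (E i → β)) : Prop :=
  ∀ i j (x : E i → β), x ∈ SS i → ∃ y ∈ SS j, AgreesOn E x y

theorem AgreesOn.symm {E : ι → Set α} {i j : ι} {x : E i → β} {y : E j → β}
    (h : AgreesOn E x y) : AgreesOn E y x :=
  fun a hj hi => (h a hi hj).symm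

noncomputable def extendTo [Nonempty (α → β)] {E : ι → Set α} (SS : ∀ i, Set (E i → β))
    {i : ι} (j : ι) (x : E i → β) : E j → β :=
  haveI : Nonempty (E j → β) := ⟨(E j).domRestrict (Classical.arbitrary (α → β))⟩
  Classical.epsilon fun y => y ∈ SS j ∧ AgreesOn E x y

theorem extendTo_spec [Nonempty (α → β)] {E : ι → Set α} {SS : ∀ i, Set (E i → β)}
    (hK : PairwiseExtendable E SS) {i : ι} (j : ι) {x : E i → β} (hx : x ∈ SS i) :
    extendTo SS j x ∈ SS j ∧ AgreesOn E x (extendTo SS j x) :=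
  Classical.epsilon_spec (hK i j x hx)

variable {T : SimpleGraph ι}

noncomputable def extendAlong [Nonempty (α → β)] {E : ι → Set α} (SS : ∀ i, Set (E i → β)) :
    ∀ {u w : ι}, T.Walk u w → (E u → β) → (E w → β)
  | _, _, .nil, x => x
  | _, _, .cons _ p, x => extendAlong SS p (extendTo SS _ x)

theorem extendAlong_mem [Nonempty (α → β)] {E : ι → Set α} {SS : ∀ i, Set (E i → β)}
    (hK : PairwiseExtendable E SS) :
    ∀ {u w : ι} (p : T.Walk u w) {x : E u → β}, x ∈ SS u → extendAlong SS p x ∈ SS w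
  | _, _, .nil, _, hx => hx
  | _, _, .cons _ p, _, hx => extendAlong_mem hK p (extendTo_spec hK _ hx).1

theorem extendAlong_concat [Nonempty (α → β)] {E : ι → Set α} (SS : ∀ i, Set (E i → β)) :
    ∀ {u v w : ι} (p : T.Walk u v) (h : T.Adj v w) (x : E u → β),
      extendAlong SS (p.concat h) x = extendTo SS w (extendAlong SS p x)
  | _, _, _, .nil, _, _ => rfl
  | _, _, _, .cons _ p, h, _ => extendAlong_concat SS p h _

theorem apply_eq_of_forall_mem_support {E : ι → Set α} {s : ∀ i, E i → β}
    (hadj : ∀ u w, T.Adj u w → AgreesOn E (s u) (s w)) {a : α} :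
    ∀ {u w : ι} (p : T.Walk u w), (∀ e ∈ p.support, a ∈ E e) →
      ∀ (hu : a ∈ E u) (hw : a ∈ E w), s u ⟨a, hu⟩ = s w ⟨a, hw⟩
  | _, _, .nil, _, _, _ => rfl
  | _, _, .cons h p, hsupp, hu, hw => by
      have hv := hsupp _ (List.mem_cons_of_mem _ p.start_mem_support)
      exact (hadj _ _ h a hu hv).trans <| apply_eq_of_forall_mem_support hadj p
        (fun e he => hsupp e (List.mem_cons_of_mem _ he)) hv hw

theorem exists_agreesOn_of_isTree [Nonempty (α → β)] {E : ι → Set α}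
    {SS : ∀ i, Set (E i → β)} (hT : T.IsTree)
    (hK : PairwiseExtendable E SS)
    (hjoin : ∀ (a : α) (u w : ι), a ∈ E u → a ∈ E w →
      ∀ p : T.Walk u w, p.IsPath → ∀ e ∈ p.support, a ∈ E e)
    {r : ι} {x₀ : E r → β} (hx₀ : x₀ ∈ SS r) :
    ∃ s : ∀ i, E i → β, s r = x₀ ∧ (∀ i, s i ∈ SS i) ∧ ∀ i j, AgreesOn E (s i) (s j) := by
  choose pt hpt huniq using hT.existsUnique_path r
  let s i := extendAlong SS (pt i) x₀
  have hs : ∀ i, s i ∈ SS i := fun i => extendAlong_mem hK (pt i) hx₀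
  have hadj : ∀ u w, T.Adj u w → AgreesOn E (s u) (s w) := by
    intro u w h
    rcases hT.isAcyclic.eq_concat_or_eq_concat (hpt u) (hpt w) h with hw | hu
    · have : s w = extendTo SS w (s u) := by simp only [s, hw, extendAlong_concat]
      exact this ▸ (extendTo_spec hK w (hs u)).2
    · have : s u = extendTo SS u (s w) := by simp only [s, hu, extendAlong_concat]
      exact (this ▸ (extendTo_spec hK u (hs w)).2).symm
  refine ⟨s, ?_, hs, fun i j a hi hj => ?_⟩
  · simp only [s, ← huniq r .nil .nil, extendAlong]
  · obtain ⟨p, hp⟩ := (hT.existsUnique_path i j).exists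
    exact apply_eq_of_forall_mem_support hadj p (hjoin a i j hi hj p hp) hi hj

theorem exists_domRestrict_eq_of_agreesOn [Nonempty (α → β)] {E : ι → Set α}
    {s : ∀ i, E i → β} (hs : ∀ i j, AgreesOn E (s i) (s j)) :
    ∃ h : α → β, ∀ i, (E i).domRestrict h = s i := by
  classical
  refine ⟨fun a => if ha : ∃ i, a ∈ E i then s ha.choose ⟨a, ha.choose_spec⟩
    else Classical.arbitrary (α → β) a, fun i => funext fun ⟨a, ha⟩ => ?_⟩
  have hex : ∃ i, a ∈ E i := ⟨i, ha⟩
  simp only [Set.domRestrict, dif_pos hex]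
  exact hs _ _ a _ _

theorem IsJoinTree.exists_domRestrict_mem [Nonempty (α → β)] {H : Set (Set α)}
    {T : SimpleGraph H} (hT : IsJoinTree H T) {SS : ∀ e : H, Set (↥(e : Set α) → β)}
    (hK : PairwiseExtendable (fun e : H => (e : Set α)) SS) {r : H} {x₀ : ↥(r : Set α) → β}
    (hx₀ : x₀ ∈ SS r) :
    ∃ h : α → β, (∀ e : H, (e : Set α).domRestrict h ∈ SS e) ∧ (r : Set α).domRestrict h = x₀ := by
  obtain ⟨s, hsr, hs, hagree⟩ := exists_agreesOn_of_isTree hT.1 hK hT.2 hx₀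
  obtain ⟨h, hh⟩ := exists_domRestrict_eq_of_agreesOn hagree
  exact ⟨h, fun e => hh e ▸ hs e, hsr ▸ hh r⟩

end JoinTreeGluing

section ViewConsistency

variable {ℬ : RelStruct σ ar B} {V : ViewStruct σ ar A 𝒜 ν}

theorem pwConsistent_homRestrict (V : ViewStruct σ ar A 𝒜 ν) (ℬ : RelStruct σ ar B) :
    PWConsistent V (fun w => homRestrict 𝒜 ℬ (V.vars w)) := by
  rintro v₁ v₂ -
  ext x
  constructor <;> rintro ⟨-, ⟨h, hh, rfl⟩, rfl⟩
  exacts [⟨_, ⟨h, hh, rfl⟩, rfl⟩, ⟨_, ⟨h, hh, rfl⟩, rfl⟩]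

theorem PWConsistent.union {BV₁ BV₂ : ∀ v : ν, Set (↥(V.vars v) → B)}
    (h₁ : PWConsistent V BV₁) (h₂ : PWConsistent V BV₂) :
    PWConsistent V (fun w => BV₁ w ∪ BV₂ w) := by
  intro v₁ v₂ hint
  simp only [Set.image_union, h₁ v₁ v₂ hint, h₂ v₁ v₂ hint]

theorem PWConsistent.exists_agreesOn {BV : ∀ v : ν, Set (↥(V.vars v) → B)}
    (hPC : PWConsistent V BV) (hne : ∀ w, (BV w).Nonempty) {v : ν} {x : ↥(V.vars v) → B}
    (hx : x ∈ BV v) (w : ν) : ∃ y ∈ BV w, AgreesOn V.vars x y := by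
  by_cases hint : (V.vars v ∩ V.vars w).Nonempty
  · obtain ⟨y, hy, hxy⟩ : restr Set.inter_subset_left x ∈ restr Set.inter_subset_right '' BV w :=
      hPC v w hint ▸ Set.mem_image_of_mem _ hx
    exact ⟨y, hy, fun a hv hw => (congrFun hxy ⟨a, hv, hw⟩).symm⟩
  · exact ⟨_, (hne w).some_mem, fun a hv hw => absurd ⟨a, hv, hw⟩ hint⟩

theorem homRestrict_subset_GAC {BV : ∀ v : ν, Set (↥(V.vars v) → B)} (hleg : Legal 𝒜 ℬ V BV)
    (v : ν) : homRestrict 𝒜 ℬ (V.vars v) ⊆ GAC V BV v :=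
  fun _ hg => ⟨_, hleg.1, pwConsistent_homRestrict V ℬ, hg⟩

theorem Legal.mem_rel_of_agrees {BV BV' : ∀ v : ν, Set (↥(V.vars v) → B)}
    (hleg : Legal 𝒜 ℬ V BV) (hsub : ∀ w, BV' w ⊆ BV w) (hPC : PWConsistent V BV')
    (hne : ∀ w, (BV' w).Nonempty) {R : σ} {t : Fin (ar R) → A} (ht : t ∈ 𝒜.rel R) {v : ν}
    (htv : ∀ k, t k ∈ V.vars v) {G : ↥(V.vars v) → B} (hG : G ∈ BV' v) {f : A → B}
    (hf : ∀ k, G ⟨t k, htv k⟩ = f (t k)) : (fun k => f (t k)) ∈ ℬ.rel R := by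
  obtain ⟨y, hy, hGy⟩ := hPC.exists_agreesOn hne hG (V.base R t ht)
  convert hleg.2 R t ht y (hsub _ hy) using 1
  funext k
  rw [← hf k]
  exact hGy _ _ _

end ViewConsistency

theorem comp_eq_of_isHom_addRel {r : ℕ} {t : Fin r → A}
    {𝒜' : RelStruct (σ ⊕ Unit) (Sum.elim ar fun _ => r) A}
    (hsub : SubStructOf 𝒜' (addRel 𝒜 r t)) {c : A → A} (hc : IsHom (addRel 𝒜 r t) 𝒜' c) :
    (fun k => c (t k)) = t :=
  hsub (Sum.inr ()) (hc (Sum.inr ()) t (Set.mem_singleton t))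

section TreeProjection

variable {ℬ : RelStruct σ ar B} {V : ViewStruct σ ar A 𝒜 ν} {BV : ∀ v : ν, Set (↥(V.vars v) → B)}

theorem exists_isHom_domRestrict_eq_of_mem_GAC (hleg : Legal 𝒜 ℬ V BV) {h₀ : A → B}
    (hh₀ : IsHom 𝒜 ℬ h₀) {v : ν} (htp : TpCovered V (V.vars v)) {g : ↥(V.vars v) → B}
    (hg : g ∈ GAC V BV v) : ∃ h : A → B, IsHom 𝒜 ℬ h ∧ (V.vars v).domRestrict h = g := by
  obtain ⟨BV', hBV'sub, hPC', hgv⟩ := hg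
  let BV'' : ∀ w : ν, Set (↥(V.vars w) → B) := fun w => BV' w ∪ homRestrict 𝒜 ℬ (V.vars w)
  have hPC : PWConsistent V BV'' := hPC'.union (pwConsistent_homRestrict V ℬ)
  have hne : ∀ w, (BV'' w).Nonempty := fun w => ⟨_, .inr ⟨h₀, hh₀, rfl⟩⟩
  have hsub : ∀ w, BV'' w ⊆ BV w := fun w => Set.union_subset (hBV'sub w) (hleg.1 w)
  obtain ⟨r, t, -, ht, 𝒜', ⟨h𝒜', ⟨c, hc⟩, -⟩, Ha, ⟨T, hT⟩, hle₁, hle₂⟩ := htp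
  have hct := comp_eq_of_isHom_addRel h𝒜' hc
  have hcover : ∀ e : Ha, ∃ w, (e : Set A) ⊆ V.vars w := fun e => by
    obtain ⟨-, ⟨w, rfl⟩, hew⟩ := hle₂ e e.2
    exact ⟨w, hew⟩
  choose vw hvw using hcover
  let SS : ∀ e : Ha, Set (↥(e : Set A) → B) := fun e => restr (hvw e) '' BV'' (vw e)
  have hK : PairwiseExtendable (fun e : Ha => (e : Set A)) SS := by
    rintro e₁ e₂ - ⟨G₁, hG₁, rfl⟩
    obtain ⟨G₂, hG₂, hG₁₂⟩ := hPC.exists_agreesOn hne hG₁ (vw e₂)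
    exact ⟨_, Set.mem_image_of_mem _ hG₂, fun a h₁ h₂ => hG₁₂ a (hvw e₁ h₁) (hvw e₂ h₂)⟩
  obtain ⟨eO, heO, htO⟩ := hle₁ _ ⟨Sum.inr (), t, hct ▸ hc (Sum.inr ()) t rfl, rfl⟩
  obtain ⟨G₀, hG₀, hgG₀⟩ := hPC.exists_agreesOn hne (Or.inl hgv) (vw ⟨eO, heO⟩)
  have : Nonempty (A → B) := ⟨h₀⟩
  obtain ⟨h, hh, hhO⟩ := hT.exists_domRestrict_mem hK (Set.mem_image_of_mem _ hG₀)
  refine ⟨fun a => h (c a), fun R u hu => ?_, funext fun ⟨a, ha⟩ => ?_⟩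
  · have hcu := hc (Sum.inl R) u hu
    obtain ⟨e, he, hue⟩ := hle₁ _ ⟨Sum.inl R, _, hcu, rfl⟩
    obtain ⟨G, hG, hGh⟩ := hh ⟨e, he⟩
    exact hleg.mem_rel_of_agrees hsub hPC hne (h𝒜' _ hcu) (fun k => hvw _ (hue ⟨k, rfl⟩)) hG
      fun k => congrFun hGh ⟨_, hue ⟨k, rfl⟩⟩
  · obtain ⟨k, rfl⟩ := ht ▸ ha
    have hk : t k ∈ eO := htO ⟨k, rfl⟩
    simp only [Set.domRestrict, congrFun hct k]
    rw [hgG₀ _ ha (hvw _ hk)]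
    exact congrFun hhO ⟨t k, hk⟩

theorem GAC_eq_homRestrict_of_tpCovered (hleg : Legal 𝒜 ℬ V BV) {h₀ : A → B}
    (hh₀ : IsHom 𝒜 ℬ h₀) {v : ν} (htp : TpCovered V (V.vars v)) :
    GAC V BV v = homRestrict 𝒜 ℬ (V.vars v) := by
  refine subset_antisymm (fun g hg => ?_) (homRestrict_subset_GAC hleg v)
  obtain ⟨h, hh, rfl⟩ := exists_isHom_domRestrict_eq_of_mem_GAC hleg hh₀ htp hg
  exact ⟨h, hh, rfl⟩

end TreeProjection

theorem isHom_iff_of_pinned {κ : Type} {Xs : κ → A} {dSym : κ → σ}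
    (hdom : ∀ j, DomRestricted 𝒜 (dSym j) (Xs j)) {J : Set κ} {a : κ → B}
    {ℬ ℬ' : RelStruct σ ar B} (hpin : ∀ j ∈ J, ℬ'.rel (dSym j) = {fun _ => a j})
    (hrest : ∀ R : σ, (∀ j ∈ J, R ≠ dSym j) → ℬ'.rel R = ℬ.rel R)
    (ha : ∀ j ∈ J, (fun _ => a j) ∈ ℬ.rel (dSym j)) {h : A → B} :
    IsHom 𝒜 ℬ' h ↔ IsHom 𝒜 ℬ h ∧ ∀ j ∈ J, h (Xs j) = a j := by
  have hdomRel : ∀ j, 𝒜.rel (dSym j) = {fun _ => Xs j} := fun j => (hdom j).2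
  constructor
  · intro hh
    have hfix : ∀ j ∈ J, h (Xs j) = a j := fun j hj => by
      have := hh (dSym j) _ (hdomRel j ▸ Set.mem_singleton _)
      rw [hpin j hj, Set.mem_singleton_iff] at this
      exact congrFun this ⟨0, by rw [(hdom j).1]; exact Nat.one_pos⟩
    refine ⟨fun R u hu => ?_, hfix⟩
    by_cases hR : ∃ j ∈ J, R = dSym j
    · obtain ⟨j, hj, rfl⟩ := hR
      rw [hdomRel j, Set.mem_singleton_iff] at hu
      simpa only [hu, hfix j hj] using ha j hj
    · exact hrest R (fun j hj hRj => hR ⟨j, hj, hRj⟩) ▸ hh R u hu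
  · rintro ⟨hh, hfix⟩ R u hu
    by_cases hR : ∃ j ∈ J, R = dSym j
    · obtain ⟨j, hj, rfl⟩ := hR
      rw [hdomRel j, Set.mem_singleton_iff] at hu
      simp only [hpin j hj, hu, hfix j hj, Set.mem_singleton_iff]
    · exact hrest R (fun j hj hRj => hR ⟨j, hj, hRj⟩) ▸ hh R u hu

theorem statement16_general
    (𝒜 : RelStruct σ ar A)
    (V : ViewStruct σ ar A 𝒜 ν)
    (m : ℕ) (Xs : Fin m → A)
    (dSym : Fin m → σ) (hdom : ∀ j, DomRestricted 𝒜 (dSym j) (Xs j))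
    (hti : ∀ j, (fun _ => Xs j : Fin (ar (dSym j)) → A) ∈ 𝒜.rel (dSym j))
    (htp : ∀ j, TpCovered V {Xs j})
    (ℬ : RelStruct σ ar B) (i : Fin m)
    (hstar : A → B) (hhom : IsHom 𝒜 ℬ hstar)
    (ℬi : RelStruct σ ar B)
    (hBi1 : ∀ j, j < i → ℬi.rel (dSym j) = {fun _ => hstar (Xs j)})
    (hBi2 : ∀ R : σ, (∀ j, j < i → R ≠ dSym j) → ℬi.rel R = ℬ.rel R)
    (BV : ∀ v : ν, Set (↥(V.vars v) → B))
    (hleg : Legal 𝒜 ℬi V BV) :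
    GAC V BV (V.base (dSym i) (fun _ => Xs i) (hti i)) =
      { g | ∃ a : B, g = (fun _ => a) ∧
          ∃ h : A → B, IsHom 𝒜 ℬ h ∧
            (∀ j, j < i → h (Xs j) = hstar (Xs j)) ∧ h (Xs i) = a } ∧
    (GAC V BV (V.base (dSym i) (fun _ => Xs i) (hti i))).Nonempty := by
  have hpinned : ∀ {h}, IsHom 𝒜 ℬi h ↔
      IsHom 𝒜 ℬ h ∧ ∀ j ∈ {j | j < i}, h (Xs j) = hstar (Xs j) :=
    isHom_iff_of_pinned hdom hBi1 hBi2 fun j _ => hhom _ _ (hti j)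
  have : Nonempty (Fin (ar (dSym i))) := ⟨⟨0, by rw [(hdom i).1]; exact Nat.one_pos⟩⟩
  have hvars : V.vars (V.base (dSym i) (fun _ => Xs i) (hti i)) = {Xs i} := by
    rw [V.base_vars, Set.range_const]
  have hhomᵢ : IsHom 𝒜 ℬi hstar := hpinned.2 ⟨hhom, fun _ _ => rfl⟩
  rw [GAC_eq_homRestrict_of_tpCovered hleg hhomᵢ (hvars ▸ htp i)]
  have hrestrict : ∀ h : A → B,
      (V.vars (V.base (dSym i) (fun _ => Xs i) (hti i))).domRestrict h = fun _ => h (Xs i) :=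
    fun h => funext fun ⟨x, hx⟩ => congrArg h (by rwa [hvars] at hx)
  refine ⟨Set.ext fun g => ⟨?_, ?_⟩, ⟨_, hstar, hhomᵢ, rfl⟩⟩
  · rintro ⟨h, hh, rfl⟩
    exact ⟨h (Xs i), hrestrict h, h, (hpinned.1 hh).1, (hpinned.1 hh).2, rfl⟩
  · rintro ⟨-, rfl, h, hh, hfix, rfl⟩
    exact ⟨h, hpinned.2 ⟨hh, hfix⟩, (hrestrict h).symm⟩

/-- during the enumeration, after fixing the values of
`X_1, …, X_{i-1}` according to a solution `h*` and enforcing GAC on any legal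
structure for the modified instance, the domain view of `X_i` holds exactly the
values of `X_i` in solutions of the original instance extending the current
partial assignment, and it is nonempty. -/
theorem statement16 [Finite σ] [Finite A] [Finite B] [Finite ν]
    (𝒜 : RelStruct σ ar A) (har : ∀ R : σ, 1 ≤ ar R)
    (V : ViewStruct σ ar A 𝒜 ν)
    (m : ℕ) (Xs : Fin m → A) (hinj : Function.Injective Xs)
    (dSym : Fin m → σ) (hdom : ∀ j, DomRestricted 𝒜 (dSym j) (Xs j))
    (hti : ∀ j, (fun _ => Xs j : Fin (ar (dSym j)) → A) ∈ 𝒜.rel (dSym j))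
    (htp : ∀ j, TpCovered V {Xs j})
    (ℬ : RelStruct σ ar B) (i : Fin m)
    (hstar : A → B) (hhom : IsHom 𝒜 ℬ hstar)
    (ℬi : RelStruct σ ar B)
    (hBi1 : ∀ j, j < i → ℬi.rel (dSym j) = {fun _ => hstar (Xs j)})
    (hBi2 : ∀ R : σ, (∀ j, j < i → R ≠ dSym j) → ℬi.rel R = ℬ.rel R)
    (BV : ∀ v : ν, Set (↥(V.vars v) → B))
    (hleg : Legal 𝒜 ℬi V BV) :
    GAC V BV (V.base (dSym i) (fun _ => Xs i) (hti i)) =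
      { g | ∃ a : B, g = (fun _ => a) ∧
          ∃ h : A → B, IsHom 𝒜 ℬ h ∧
            (∀ j, j < i → h (Xs j) = hstar (Xs j)) ∧ h (Xs i) = a } ∧
    (GAC V BV (V.base (dSym i) (fun _ => Xs i) (hti i))).Nonempty :=
  statement16_general 𝒜 V m Xs dSym hdom hti htp ℬ i hstar hhom ℬi hBi1 hBi2 BV hleg
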